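/- Let U_n : ℝ → ℝ (n ∈ ℕ) be twice continuously differentiable, strictly concave, strictly increasing functions such that for each x ∈ ℝ the risk aversion r_n(x) := −U_n''(x)/U_n'(x) tends to ∞ as n → ∞, and suppose there exist x₀ ∈ ℝ and α ∈ (0,∞) with U_n'(x₀) → α as n → ∞. Then for every x < x₀ one has U_n'(x) → ∞, and for every x > x₀ one has U_n'(x) → 0, as n → ∞. -/

import Mathlib

/-! The risk aversion is minus the logarithmic derivative of `U'`, so
`U'(x) = U'(x₀) · exp (-∫_{x₀}^{x} r)`. Concavity makes `r_n ≥ 0`, hence by Fatou's lemma the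
pointwise divergence `r_n → ∞` forces `∫_a^b r_n → ∞` on every nondegenerate interval, and the
exponential factor tends to `∞` for `x < x₀` and to `0` for `x > x₀`. -/

open Filter MeasureTheory Set Real

theorem MeasureTheory.tendsto_integral_atTop_of_tendsto_atTop {α : Type*} [MeasurableSpace α]
    {μ : Measure α} [NeZero μ] {f : ℕ → α → ℝ} (hint : ∀ n, Integrable (f n) μ)
    (hnn : ∀ n, 0 ≤ᵐ[μ] f n) (hlim : ∀ᵐ x ∂μ, Tendsto (fun n => f n x) atTop atTop) :
    Tendsto (fun n => ∫ x, f n x ∂μ) atTop atTop := by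
  rw [← ENNReal.tendsto_ofReal_nhds_top]
  simp_rw [ofReal_integral_eq_lintegral_ofReal (hint _) (hnn _)]
  have hliminf : ∀ᵐ x ∂μ, liminf (fun n => ENNReal.ofReal (f n x)) atTop = ⊤ :=
    hlim.mono fun x hx => (ENNReal.tendsto_ofReal_nhds_top.2 hx).liminf_eq
  have hfatou := lintegral_liminf_le' (μ := μ) (u := atTop) fun n =>
    (hint n).aemeasurable.ennreal_ofReal
  rw [lintegral_congr_ae hliminf, lintegral_const,
    ENNReal.top_mul (Measure.measure_univ_ne_zero.2 (NeZero.ne μ))] at hfatou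
  exact tendsto_of_le_liminf_of_limsup_le hfatou le_top

theorem intervalIntegral.tendsto_integral_atTop_of_tendsto_atTop {a b : ℝ} (hab : a < b)
    {f : ℕ → ℝ → ℝ} (hint : ∀ n, IntervalIntegrable (f n) volume a b)
    (hnn : ∀ n, ∀ x ∈ Ioc a b, 0 ≤ f n x)
    (hlim : ∀ x ∈ Ioc a b, Tendsto (fun n => f n x) atTop atTop) :
    Tendsto (fun n => ∫ x in a..b, f n x) atTop atTop := by
  have : NeZero (volume.restrict (Ioc a b)) :=
    ⟨by simp [Measure.restrict_eq_zero, hab]⟩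
  simp_rw [intervalIntegral.integral_of_le hab.le]
  exact MeasureTheory.tendsto_integral_atTop_of_tendsto_atTop (fun n => (hint n).1)
    (fun n => (ae_restrict_iff' measurableSet_Ioc).2 (.of_forall (hnn n)))
    ((ae_restrict_iff' measurableSet_Ioc).2 (.of_forall hlim))

theorem eq_mul_exp_integral_logDeriv {f : ℝ → ℝ} {a b : ℝ}
    (hf : ∀ x ∈ uIcc a b, DifferentiableAt ℝ f x) (hpos : ∀ x ∈ uIcc a b, 0 < f x)
    (hint : IntervalIntegrable (logDeriv f) volume a b) :
    f b = f a * exp (∫ x in a..b, logDeriv f x) := by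
  rw [intervalIntegral.integral_eq_sub_of_hasDerivAt (f := fun x => log (f x))
    (f' := logDeriv f)
    (fun x hx => (hf x hx).hasDerivAt.log (hpos x hx).ne') hint, exp_sub,
    exp_log (hpos a left_mem_uIcc), exp_log (hpos b right_mem_uIcc)]
  field_simp [(hpos a left_mem_uIcc).ne']

noncomputable def riskAversion (U : ℝ → ℝ) (x : ℝ) : ℝ :=
  -deriv (deriv U) x / deriv U x

theorem logDeriv_deriv (U : ℝ → ℝ) : logDeriv (deriv U) = -riskAversion U := by
  funext x
  simp [riskAversion, logDeriv_apply, neg_div]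

theorem StrictConcaveOn.deriv_pos {U : ℝ → ℝ} (hconc : StrictConcaveOn ℝ univ U)
    (hdiff : Differentiable ℝ U) (hmono : Monotone U) (x : ℝ) : 0 < deriv U x :=
  hmono.deriv_nonneg.trans_lt <|
    hconc.strictAntiOn_deriv (fun y _ => hdiff y) trivial trivial (lt_add_one x)

theorem riskAversion_nonneg {U : ℝ → ℝ} (hconc : ConcaveOn ℝ univ U) (hdiff : Differentiable ℝ U)
    {x : ℝ} (hpos : 0 ≤ deriv U x) : 0 ≤ riskAversion U x :=
  have hanti : Antitone (deriv U) :=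
    antitoneOn_univ.1 (hconc.antitoneOn_deriv fun y _ => hdiff y)
  div_nonneg (neg_nonneg.2 hanti.deriv_nonpos) hpos

theorem continuous_riskAversion {U : ℝ → ℝ} (hU : ContDiff ℝ 2 U) (hpos : ∀ x, 0 < deriv U x) :
    Continuous (riskAversion U) :=
  have hU' : ContDiff ℝ 1 (deriv U) := hU.deriv'
  (hU'.continuous_deriv le_rfl).neg.div hU'.continuous fun x => (hpos x).ne'

theorem deriv_eq_mul_exp_neg_integral_riskAversion {U : ℝ → ℝ} (hU : ContDiff ℝ 2 U)
    (hpos : ∀ x, 0 < deriv U x) (a b : ℝ) :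
    deriv U b = deriv U a * exp (-∫ x in a..b, riskAversion U x) := by
  have hU' : ContDiff ℝ 1 (deriv U) := hU.deriv'
  have hint : IntervalIntegrable (logDeriv (deriv U)) volume a b := by
    rw [logDeriv_deriv]
    exact (continuous_riskAversion hU hpos).neg.intervalIntegrable a b
  have := eq_mul_exp_integral_logDeriv
    (fun x _ => (hU'.differentiable one_ne_zero).differentiableAt) (fun x _ => hpos x) hint
  simpa only [logDeriv_deriv, Pi.neg_apply, intervalIntegral.integral_neg] using this

/-- If the risk aversions of `U n` tend to infinity pointwise and `deriv (U n) x₀ → α > 0`,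
then `deriv (U n) x → ∞` for `x < x₀` and `deriv (U n) x → 0` for `x > x₀`. -/
theorem deriv_limits_of_riskAversion_tendsto (U : ℕ → ℝ → ℝ)
    (hC2 : ∀ n, ContDiff ℝ 2 (U n))
    (hconc : ∀ n, StrictConcaveOn ℝ Set.univ (U n))
    (hmono : ∀ n, StrictMono (U n))
    (hra : ∀ x : ℝ,
      Tendsto (fun n => -(deriv (deriv (U n)) x) / deriv (U n) x) atTop atTop)
    (x₀ α : ℝ) (hα : 0 < α)
    (hd : Tendsto (fun n => deriv (U n) x₀) atTop (nhds α)) :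
    (∀ x < x₀, Tendsto (fun n => deriv (U n) x) atTop atTop) ∧
    (∀ x > x₀, Tendsto (fun n => deriv (U n) x) atTop (nhds 0)) := by
  have hdiff n : Differentiable ℝ (U n) := (hC2 n).differentiable (by norm_num)
  have hpos n : ∀ x, 0 < deriv (U n) x := (hconc n).deriv_pos (hdiff n) (hmono n).monotone
  have hintegral {a b : ℝ} (hab : a < b) :
      Tendsto (fun n => ∫ t in a..b, riskAversion (U n) t) atTop atTop :=
    intervalIntegral.tendsto_integral_atTop_of_tendsto_atTop hab
      (fun n => (continuous_riskAversion (hC2 n) (hpos n)).intervalIntegrable a b)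
      (fun n x _ => riskAversion_nonneg (hconc n).concaveOn (hdiff n) (hpos n x).le)
      fun x _ => hra x
  have hformula n x : deriv (U n) x =
      deriv (U n) x₀ * exp (-∫ t in x₀..x, riskAversion (U n) t) :=
    deriv_eq_mul_exp_neg_integral_riskAversion (hC2 n) (hpos n) x₀ x
  refine ⟨fun x hx => ?_, fun x hx => ?_⟩
  · refine (hd.pos_mul_atTop hα (tendsto_exp_atTop.comp (hintegral hx))).congr fun n => ?_
    rw [hformula n x, intervalIntegral.integral_symm, neg_neg]
    rfl
  · simpa only [← hformula, Function.comp_def, mul_zero] using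
      hd.mul (tendsto_exp_atBot.comp (tendsto_neg_atTop_atBot.comp (hintegral hx)))
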